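/- Let A be an associative unital ring, ι a finite set, T a map from subsets of ι to A with T(∅) = 1, and for each l ∈ ι let T'_l be a map from subsets of ι to A with T'_l(X) = 0 whenever l ∉ X or X = ∅; let T̄ and T̄'_l be the associated barred families. Then for every nonempty Z ⊆ ι and every l ∈ ι one has Σ_{X ⊔ Y = Z} (−1)^{|X|} [T'_l(X)·T̄(Y) + T(X)·T̄'_l(Y)] = 0 and Σ_{X ⊔ Y = Z} (−1)^{|X|} [T̄'_l(X)·T(Y) + T̄(X)·T'_l(Y)] = 0. -/

import Mathlib

/-!
Write `(a ⋆ b) Z = ∑_{X ⊆ Z} a X * b (Z \ X)` for subset convolution, an associative product on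
`Finset ι → A` whose unit `δ_∅` is the indicator of `∅`. Peeling off the first block, the
recursions defining `S := opSum T` and `D := opSumD T T'` say exactly `T ⋆ S = δ_∅` and
`T' ⋆ S + T ⋆ D = 0`; after absorbing the signs `(-1)^|X|` of `T̄`, `T̄'`, the first identity is
the latter. Since `S ∅ = 1`, `S` has a right inverse too, so `S` is a two-sided inverse of `T`,
and the second identity follows from `D ⋆ T + S ⋆ T' = S ⋆ (T' ⋆ S + T ⋆ D) ⋆ T = 0`.
-/

/-- Sum over all ordered partitions of `X` into `r ≥ 1` nonempty pairwise disjoint blocks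
`X₁, …, X_r` of `(-1)^r * T X₁ * ⋯ * T X_r` (with value `1` for `X = ∅`), computed by peeling
off the first block. -/
def opSum {A : Type*} [Ring A] {ι : Type*} [DecidableEq ι]
    (T : Finset ι → A) (X : Finset ι) : A :=
  if _hX : X = ∅ then 1
  else
    ∑ Y ∈ (X.powerset.filter (fun Y => Y ≠ ∅)).attach,
      (-1 : A) * T Y.1 * opSum T (X \ Y.1)
termination_by X.card
decreasing_by
  have hY := Y.2
  simp only [Finset.mem_filter, Finset.mem_powerset] at hY
  have h1 : Y.1.card ≤ X.card := Finset.card_le_card hY.1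
  have h2 : 0 < Y.1.card := Finset.card_pos.mpr (Finset.nonempty_iff_ne_empty.mpr hY.2)
  rw [Finset.card_sdiff, Finset.inter_eq_left.mpr hY.1]
  omega

/-- The antichronological products `T̄`, defined by `T̄(∅) = 1` and
`(−1)^{|X|} T̄(X) = Σ_{r=1}^{|X|} (−1)^r Σ T(X₁)⋯T(X_r)`, the inner sum running over all ordered
partitions of `X` into `r` nonempty pairwise disjoint subsets. -/
def chronoBar {A : Type*} [Ring A] {ι : Type*} [DecidableEq ι]
    (T : Finset ι → A) (X : Finset ι) : A :=
  (-1 : A) ^ X.card * opSum T X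

/-- Sum over all ordered partitions of `X` into `r ≥ 1` nonempty pairwise disjoint blocks of
`(-1)^r * T X₁ ⋯ T' X_k ⋯ T X_r`, with `T'` replacing `T` in exactly one block (value `0` for
`X = ∅`), computed by peeling off the first block. -/
def opSumD {A : Type*} [Ring A] {ι : Type*} [DecidableEq ι]
    (T T' : Finset ι → A) (X : Finset ι) : A :=
  if _hX : X = ∅ then 0
  else
    ∑ Y ∈ (X.powerset.filter (fun Y => Y ≠ ∅)).attach,
      (-1 : A) * (T' Y.1 * opSum T (X \ Y.1) + T Y.1 * opSumD T T' (X \ Y.1))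
termination_by X.card
decreasing_by
  have hY := Y.2
  simp only [Finset.mem_filter, Finset.mem_powerset] at hY
  have h1 : Y.1.card ≤ X.card := Finset.card_le_card hY.1
  have h2 : 0 < Y.1.card := Finset.card_pos.mpr (Finset.nonempty_iff_ne_empty.mpr hY.2)
  rw [Finset.card_sdiff, Finset.inter_eq_left.mpr hY.1]
  omega

/-- The barred family `T̄'`, defined by `T̄'(∅) = 0` and
`(−1)^{|X|} T̄'(X) = Σ_{r=1}^{|X|} (−1)^r Σ Σ_{k=1}^{r} T(X₁)⋯T'(X_k)⋯T(X_r)`, the inner sum over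
ordered partitions of `X` into `r` nonempty pairwise disjoint blocks, with `T'` replacing `T`
in exactly one block. -/
def chronoBarD {A : Type*} [Ring A] {ι : Type*} [DecidableEq ι]
    (T T' : Finset ι → A) (X : Finset ι) : A :=
  (-1 : A) ^ X.card * opSumD T T' X

theorem neg_one_pow_mul_neg_one_pow_mul {R : Type*} [Ring R] (n : ℕ) (a : R) :
    (-1) ^ n * ((-1) ^ n * a) = a := by
  rw [← mul_assoc, ← pow_add, Even.neg_one_pow ⟨n, rfl⟩, one_mul]

theorem neg_one_pow_card_mul_mul_neg_one_pow_card_sdiff {R ι : Type*} [Ring R] [DecidableEq ι]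
    {X Z : Finset ι} (h : X ⊆ Z) (a b : R) :
    (-1) ^ X.card * (a * ((-1) ^ (Z \ X).card * b)) = (-1) ^ Z.card * (a * b) := by
  rw [← mul_assoc a, ← ((Commute.neg_one_left a).pow_left _).eq, mul_assoc, ← mul_assoc,
    ← pow_add, add_comm, Finset.card_sdiff_add_card_eq_card h]

namespace SubsetConv

variable {R : Type*} {ι : Type*} [DecidableEq ι]

def subsetConv [Semiring R] (a b : Finset ι → R) (Z : Finset ι) : R :=
  ∑ X ∈ Z.powerset, a X * b (Z \ X)

def unit [Semiring R] (Z : Finset ι) : R := if Z = ∅ then 1 else 0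

end SubsetConv

local infixl:70 " ⋆ " => SubsetConv.subsetConv

namespace SubsetConv

variable {R : Type*} {ι : Type*} [DecidableEq ι]

theorem sum_powerset_sum_powerset {M : Type*} [AddCommMonoid M] (Z : Finset ι)
    (f : Finset ι → Finset ι → M) :
    ∑ Y ∈ Z.powerset, ∑ X ∈ Y.powerset, f X Y
      = ∑ X ∈ Z.powerset, ∑ W ∈ (Z \ X).powerset, f X (X ∪ W) := by
  rw [Finset.sum_comm' (t' := Z.powerset) (s' := fun X => Finset.Icc X Z)]
  · refine Finset.sum_congr rfl fun X hX => ?_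
    rw [Finset.Icc_eq_image_powerset (Finset.mem_powerset.mp hX), Finset.sum_image]
    intro W hW V hV hWV
    simp only [Finset.coe_powerset, Set.mem_preimage, Set.mem_powerset_iff,
      Finset.coe_subset, Finset.subset_sdiff] at hW hV
    simpa [Finset.union_sdiff_cancel_left hW.2.symm, Finset.union_sdiff_cancel_left hV.2.symm]
      using congrArg (· \ X) hWV
  · intro Y X
    simp only [Finset.mem_powerset, Finset.mem_Icc]
    exact ⟨fun h => ⟨⟨h.2, h.1⟩, h.2.trans h.1⟩, fun h => ⟨h.1.2, h.1.1⟩⟩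

section Semiring

variable [Semiring R]

theorem subsetConv_unit (a : Finset ι → R) : a ⋆ unit = a := by
  funext Z
  rw [subsetConv, Finset.sum_eq_single_of_mem Z (Finset.mem_powerset_self Z)]
  · simp [unit]
  · intro X hX hXZ
    have : Z \ X ≠ ∅ := by
      simpa [Finset.sdiff_eq_empty_iff_subset] using
        fun h => hXZ (h.antisymm' (Finset.mem_powerset.mp hX))
    simp [unit, this]

theorem unit_subsetConv (a : Finset ι → R) : unit ⋆ a = a := by
  funext Z
  rw [subsetConv, Finset.sum_eq_single_of_mem ∅ (Finset.empty_mem_powerset Z)]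
  · simp [unit]
  · intro X _ hX
    simp [unit, hX]

theorem subsetConv_add (a b c : Finset ι → R) : a ⋆ (b + c) = a ⋆ b + a ⋆ c := by
  funext Z
  simp [subsetConv, mul_add, Finset.sum_add_distrib]

theorem add_subsetConv (a b c : Finset ι → R) : (a + b) ⋆ c = a ⋆ c + b ⋆ c := by
  funext Z
  simp [subsetConv, add_mul, Finset.sum_add_distrib]

theorem subsetConv_zero (a : Finset ι → R) : a ⋆ 0 = 0 := by
  funext Z
  simp [subsetConv]

theorem zero_subsetConv (a : Finset ι → R) : 0 ⋆ a = 0 := by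
  funext Z
  simp [subsetConv]

theorem subsetConv_assoc (a b c : Finset ι → R) : a ⋆ b ⋆ c = a ⋆ (b ⋆ c) := by
  funext Z
  simp only [subsetConv, Finset.sum_mul, Finset.mul_sum]
  rw [sum_powerset_sum_powerset Z fun X Y => a X * b (Y \ X) * c (Z \ Y)]
  refine Finset.sum_congr rfl fun X _ => Finset.sum_congr rfl fun W hW => ?_
  have hXW : Disjoint X W :=
    Finset.disjoint_of_subset_right (Finset.mem_powerset.mp hW) disjoint_sdiff_self_right
  rw [Finset.union_sdiff_cancel_left hXW, sdiff_sdiff_left, Finset.sup_eq_union, mul_assoc]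

end Semiring

variable [Ring R]

theorem opSum_empty (T : Finset ι → R) : opSum T ∅ = 1 := by
  rw [opSum, dif_pos rfl]

theorem opSum_of_ne_empty (T : Finset ι → R) {X : Finset ι} (hX : X ≠ ∅) :
    opSum T X = -∑ Y ∈ X.powerset.erase ∅, T Y * opSum T (X \ Y) := by
  rw [opSum, dif_neg hX, Finset.sum_attach _ fun Y => -1 * T Y * opSum T (X \ Y),
    ← Finset.filter_ne']
  simp only [neg_mul, one_mul, Finset.sum_neg_distrib]

theorem opSumD_empty (T T' : Finset ι → R) : opSumD T T' ∅ = 0 := by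
  rw [opSumD, dif_pos rfl]

theorem opSumD_of_ne_empty (T T' : Finset ι → R) {X : Finset ι} (hX : X ≠ ∅) :
    opSumD T T' X =
      -∑ Y ∈ X.powerset.erase ∅, (T' Y * opSum T (X \ Y) + T Y * opSumD T T' (X \ Y)) := by
  rw [opSumD, dif_neg hX,
    Finset.sum_attach _ fun Y => -1 * (T' Y * opSum T (X \ Y) + T Y * opSumD T T' (X \ Y)),
    ← Finset.filter_ne']
  simp only [neg_one_mul, Finset.sum_neg_distrib]

theorem subsetConv_opSum {T : Finset ι → R} (hT : T ∅ = 1) : T ⋆ opSum T = unit := by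
  funext Z
  rw [subsetConv, ← Finset.add_sum_erase _ _ (Finset.empty_mem_powerset Z), unit]
  split_ifs with hZ
  · subst hZ
    simp [hT, opSum_empty]
  · rw [Finset.sdiff_empty, hT, one_mul, opSum_of_ne_empty T hZ, neg_add_cancel]

theorem subsetConv_opSum_add_subsetConv_opSumD {T T' : Finset ι → R} (hT : T ∅ = 1)
    (hT' : T' ∅ = 0) : T' ⋆ opSum T + T ⋆ opSumD T T' = 0 := by
  funext Z
  rw [Pi.add_apply, subsetConv, subsetConv, ← Finset.sum_add_distrib,
    ← Finset.add_sum_erase _ _ (Finset.empty_mem_powerset Z), Pi.zero_apply]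
  by_cases hZ : Z = ∅
  · subst hZ
    simp [hT', opSumD_empty]
  · rw [Finset.sdiff_empty, hT, hT', zero_mul, one_mul, zero_add, opSumD_of_ne_empty T T' hZ,
      neg_add_cancel]

theorem opSum_subsetConv {T : Finset ι → R} (hT : T ∅ = 1) : opSum T ⋆ T = unit := by
  have hTU : T = opSum (opSum T) := calc
    T = T ⋆ (opSum T ⋆ opSum (opSum T)) := by
        rw [subsetConv_opSum (opSum_empty T), subsetConv_unit]
    _ = opSum (opSum T) := by rw [← subsetConv_assoc, subsetConv_opSum hT, unit_subsetConv]
  calc opSum T ⋆ T = opSum T ⋆ opSum (opSum T) := congrArg _ hTU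
    _ = unit := subsetConv_opSum (opSum_empty T)

theorem opSumD_subsetConv_add_opSum_subsetConv {T T' : Finset ι → R} (hT : T ∅ = 1)
    (hT' : T' ∅ = 0) : opSumD T T' ⋆ T + opSum T ⋆ T' = 0 := by
  have hST := opSum_subsetConv hT
  calc opSumD T T' ⋆ T + opSum T ⋆ T'
      = opSum T ⋆ (T' ⋆ opSum T + T ⋆ opSumD T T') ⋆ T := by
        rw [subsetConv_add, add_subsetConv, subsetConv_assoc, subsetConv_assoc, hST,
          subsetConv_unit, ← subsetConv_assoc, hST, unit_subsetConv, add_comm]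
    _ = 0 := by
        rw [subsetConv_opSum_add_subsetConv_opSumD hT hT', subsetConv_zero, zero_subsetConv]

end SubsetConv

open SubsetConv in
theorem chrono_antichrono_identities_derived_general {A : Type*} [Ring A]
    {ι : Type*} [DecidableEq ι]
    (T : Finset ι → A) (hT1 : T ∅ = 1)
    (T' : ι → Finset ι → A) (hT'0 : ∀ l, ∀ X : Finset ι, l ∉ X → T' l X = 0)
    (Z : Finset ι) (l : ι) :
    (∑ X ∈ Z.powerset,
      (-1 : A) ^ X.card *
        (T' l X * chronoBar T (Z \ X) + T X * chronoBarD T (T' l) (Z \ X)) = 0) ∧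
    (∑ X ∈ Z.powerset,
      (-1 : A) ^ X.card *
        (chronoBarD T (T' l) X * T (Z \ X) + chronoBar T X * T' l (Z \ X)) = 0) := by
  have hT'l : T' l ∅ = 0 := hT'0 l ∅ (Finset.notMem_empty l)
  constructor
  · calc _ = (-1) ^ Z.card * (T' l ⋆ opSum T + T ⋆ opSumD T (T' l)) Z := by
          rw [Pi.add_apply, subsetConv, subsetConv, ← Finset.sum_add_distrib, Finset.mul_sum]
          refine Finset.sum_congr rfl fun X hX => ?_
          simp only [chronoBar, chronoBarD, mul_add,
            neg_one_pow_card_mul_mul_neg_one_pow_card_sdiff (Finset.mem_powerset.mp hX)]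
      _ = 0 := by rw [subsetConv_opSum_add_subsetConv_opSumD hT1 hT'l, Pi.zero_apply, mul_zero]
  · calc _ = (opSumD T (T' l) ⋆ T + opSum T ⋆ T' l) Z := by
          rw [Pi.add_apply, subsetConv, subsetConv, ← Finset.sum_add_distrib]
          refine Finset.sum_congr rfl fun X _ => ?_
          simp only [chronoBar, chronoBarD, mul_assoc, ← mul_add, neg_one_pow_mul_neg_one_pow_mul]
      _ = 0 := by rw [opSumD_subsetConv_add_opSum_subsetConv hT1 hT'l, Pi.zero_apply]

/-- For every nonempty `Z ⊆ ι` and every `l`: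
`Σ_{X ⊔ Y = Z} (−1)^{|X|} [T'_l(X)·T̄(Y) + T(X)·T̄'_l(Y)] = 0` and
`Σ_{X ⊔ Y = Z} (−1)^{|X|} [T̄'_l(X)·T(Y) + T̄(X)·T'_l(Y)] = 0`. -/
theorem chrono_antichrono_identities_derived {A : Type*} [Ring A]
    {ι : Type*} [Fintype ι] [DecidableEq ι]
    (T : Finset ι → A) (hT1 : T ∅ = 1)
    (T' : ι → Finset ι → A) (hT'0 : ∀ l, ∀ X : Finset ι, l ∉ X → T' l X = 0)
    (Z : Finset ι) (hZ : Z ≠ ∅) (l : ι) :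
    (∑ X ∈ Z.powerset,
      (-1 : A) ^ X.card *
        (T' l X * chronoBar T (Z \ X) + T X * chronoBarD T (T' l) (Z \ X)) = 0) ∧
    (∑ X ∈ Z.powerset,
      (-1 : A) ^ X.card *
        (chronoBarD T (T' l) X * T (Z \ X) + chronoBar T X * T' l (Z \ X)) = 0) :=
  chrono_antichrono_identities_derived_general T hT1 T' hT'0 Z l
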